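/- Single-agent off-policy policy gradient identity with emphatic weightings: the gradient of the off-policy objective J_μ(θ) = Σ_{s∈S} d_μ(s) v_θ(s) satisfies ∇_θ J_μ(θ) = Σ_{s∈S} m(s) Σ_{a∈A} [∇_θ π_θ(a|s)] q_θ(s,a), where m is the emphatic weighting vector defined by mᵀ = d_μᵀ (I − P_{θ,γ})⁻¹. -/

import Mathlib

/-!
Differentiating the Bellman equation `v(s) = ∑ₐ π(a|s) q(s,a)` gives
`∂v = P_{θ,γ} ∂v + g` with `g(s) = ∑ₐ ∂π(a|s) q(s,a)`. The matrix `I − P_{θ,γ}` is strictly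
diagonally dominant (its off-diagonal row sums are `γ − P_{θ,γ}(s,s) < 1 − P_{θ,γ}(s,s)`), hence
invertible, so `∂v = (I − P_{θ,γ})⁻¹ g` and `∂J = d_μᵀ ∂v = mᵀ g`. That `v` is differentiable at
all follows from Cramer's rule, which writes its entries as quotients of determinants.
-/

open Matrix

namespace Matrix

variable {n : Type*} [Fintype n] [DecidableEq n]

theorem det_one_sub_ne_zero_of_sum_norm_lt_one {K : Type*} [NormedField K] {M : Matrix n n K}
    (h : ∀ i, ∑ j, ‖M i j‖ < 1) : (1 - M).det ≠ 0 := by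
  refine det_ne_zero_of_sum_row_lt_diag fun k => ?_
  have hoff : ∀ j ∈ Finset.univ.erase k, ‖(1 - M) k j‖ = ‖M k j‖ := fun j hj => by
    rw [sub_apply, one_apply_ne (Finset.ne_of_mem_erase hj).symm, zero_sub, norm_neg]
  calc ∑ j ∈ Finset.univ.erase k, ‖(1 - M) k j‖ = ∑ j, ‖M k j‖ - ‖M k k‖ := by
        rw [Finset.sum_congr rfl hoff, Finset.sum_erase_eq_sub (Finset.mem_univ k)]
    _ < 1 - ‖M k k‖ := by linarith [h k]
    _ ≤ ‖(1 - M) k k‖ := by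
        simpa [sub_apply, one_apply_eq] using norm_sub_norm_le (1 : K) (M k k)

theorem eq_inv_one_sub_mulVec_iff {R : Type*} [CommRing R] {M : Matrix n n R}
    (h : IsUnit (1 - M).det) {x b : n → R} : x = (1 - M)⁻¹ *ᵥ b ↔ x = M *ᵥ x + b := by
  have hinv : x = (1 - M)⁻¹ *ᵥ b ↔ (1 - M) *ᵥ x = b := by
    constructor
    · rintro rfl
      rw [mulVec_mulVec, mul_nonsing_inv _ h, one_mulVec]
    · rintro rfl
      rw [mulVec_mulVec, nonsing_inv_mul _ h, one_mulVec]
  rw [hinv, sub_mulVec, one_mulVec, sub_eq_iff_eq_add']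

-- No invertibility hypothesis is needed: for singular `M` both sides are `0`.
theorem inv_mulVec_eq_inv_det_smul_cramer {K : Type*} [Field K] (M : Matrix n n K) (b : n → K) :
    M⁻¹ *ᵥ b = (M.det)⁻¹ • cramer M b := by
  rw [inv_def, Ring.inverse_eq_inv, smul_mulVec, cramer_eq_adjugate_mulVec]

end Matrix

section
variable {𝕜 E n : Type*} [NontriviallyNormedField 𝕜] [NormedAddCommGroup E] [NormedSpace 𝕜 E]
  [Fintype n] [DecidableEq n] {M : E → Matrix n n 𝕜} {x : E}

theorem DifferentiableAt.matrix_det (hM : ∀ i j, DifferentiableAt 𝕜 (fun y => M y i j) x) :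
    DifferentiableAt 𝕜 (fun y => (M y).det) x := by
  simp only [det_apply']
  exact .fun_sum fun σ _ =>
    (HasFDerivAt.finsetProd fun i _ => (hM (σ i) i).hasFDerivAt).differentiableAt.const_mul _

theorem DifferentiableAt.matrix_inv_mulVec {b : E → n → 𝕜}
    (hM : ∀ i j, DifferentiableAt 𝕜 (fun y => M y i j) x)
    (hb : ∀ i, DifferentiableAt 𝕜 (fun y => b y i) x) (hdet : (M x).det ≠ 0) (i : n) :
    DifferentiableAt 𝕜 (fun y => ((M y)⁻¹ *ᵥ b y) i) x := by
  simp only [inv_mulVec_eq_inv_det_smul_cramer, Pi.smul_apply, smul_eq_mul, cramer_apply]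
  refine ((DifferentiableAt.matrix_det hM).inv hdet).mul (DifferentiableAt.matrix_det fun j k => ?_)
  by_cases hk : k = i <;> simp [hk, hb j, hM j k]

end

section
variable {S A : Type*} [Fintype A] {γ : ℝ} {P : S → A → S → ℝ} {π : S → A → ℝ}

def policyKernel (γ : ℝ) (P : S → A → S → ℝ) (π : S → A → ℝ) : Matrix S S ℝ :=
  Matrix.of fun s s' => γ * ∑ a, π s a * P s a s'

theorem policyKernel_nonneg (hγ : 0 ≤ γ) (hP : ∀ s a s', 0 ≤ P s a s') (hπ : ∀ s a, 0 ≤ π s a)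
    (s s' : S) : 0 ≤ policyKernel γ P π s s' :=
  mul_nonneg hγ <| Finset.sum_nonneg fun a _ => mul_nonneg (hπ s a) (hP s a s')

variable [Fintype S]

theorem policyKernel_mulVec (w : S → ℝ) (s : S) :
    (policyKernel γ P π *ᵥ w) s = ∑ a, π s a * (γ * ∑ s', P s a s' * w s') := by
  simp only [policyKernel, mulVec, dotProduct, of_apply, Finset.mul_sum, Finset.sum_mul]
  rw [Finset.sum_comm]
  exact Finset.sum_congr rfl fun a _ => Finset.sum_congr rfl fun s' _ => by ring

theorem sum_policyKernel (hP : ∀ s a, ∑ s', P s a s' = 1) (hπ : ∀ s, ∑ a, π s a = 1) (s : S) :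
    ∑ s', policyKernel γ P π s s' = γ := by
  simp only [policyKernel, of_apply, ← Finset.mul_sum]
  rw [Finset.sum_comm]
  simp only [← Finset.mul_sum, hP, mul_one, hπ]

variable [DecidableEq S]

theorem det_one_sub_policyKernel_ne_zero (hγ0 : 0 ≤ γ) (hγ1 : γ < 1) (hP0 : ∀ s a s', 0 ≤ P s a s')
    (hP1 : ∀ s a, ∑ s', P s a s' = 1) (hπ0 : ∀ s a, 0 ≤ π s a) (hπ1 : ∀ s, ∑ a, π s a = 1) :
    (1 - policyKernel γ P π).det ≠ 0 := by
  refine det_one_sub_ne_zero_of_sum_norm_lt_one fun s => ?_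
  simp_rw [Real.norm_of_nonneg (policyKernel_nonneg hγ0 hP0 hπ0 s _), sum_policyKernel hP1 hπ1 s]
  exact hγ1

theorem eq_inv_one_sub_policyKernel_mulVec_iff (h : IsUnit (1 - policyKernel γ P π).det)
    {rbar : S → A → ℝ} {w : S → ℝ} :
    w = (1 - policyKernel γ P π)⁻¹ *ᵥ (fun s => ∑ a, π s a * rbar s a) ↔
      ∀ s, w s = ∑ a, π s a * (rbar s a + γ * ∑ s', P s a s' * w s') := by
  rw [eq_inv_one_sub_mulVec_iff h, funext_iff]
  refine forall_congr' fun s => ?_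
  rw [Pi.add_apply, policyKernel_mulVec, ← Finset.sum_add_distrib]
  simp only [mul_add, add_comm]

end

theorem fderiv_value_eq_policyKernel_mulVec_add {S A E : Type*} [Fintype S] [Fintype A]
    [NormedAddCommGroup E] [NormedSpace ℝ E] {γ : ℝ} {P : S → A → S → ℝ} {rbar : S → A → ℝ}
    {π : E → S → A → ℝ} {v : E → S → ℝ} {q : E → S → A → ℝ} {θ : E}
    (hπ : ∀ s a, DifferentiableAt ℝ (π · s a) θ) (hv : ∀ s, DifferentiableAt ℝ (v · s) θ)
    (hq : ∀ θ' s a, q θ' s a = rbar s a + γ * ∑ s', P s a s' * v θ' s')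
    (hbell : ∀ θ' s, v θ' s = ∑ a, π θ' s a * q θ' s a) (u : E) :
    (fun s => fderiv ℝ (v · s) θ u) = policyKernel γ P (π θ) *ᵥ (fun s => fderiv ℝ (v · s) θ u)
      + fun s => ∑ a, q θ s a * fderiv ℝ (π · s a) θ u := by
  have hq' : ∀ s a, HasFDerivAt (q · s a) (γ • ∑ s', P s a s' • fderiv ℝ (v · s') θ) θ := fun s a =>
    ((HasFDerivAt.fun_sum fun s' _ => (hv s').hasFDerivAt.const_mul (P s a s')).const_mul
      γ |>.const_add (rbar s a)).congr_of_eventuallyEq (.of_forall (hq · s a))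
  have hv' : ∀ s, HasFDerivAt (v · s)
      (∑ a, (π θ s a • γ • ∑ s', P s a s' • fderiv ℝ (v · s') θ
        + q θ s a • fderiv ℝ (π · s a) θ)) θ := fun s =>
    (HasFDerivAt.fun_sum fun a _ => (hπ s a).hasFDerivAt.mul (hq' s a)).congr_of_eventuallyEq
      (.of_forall (hbell · s))
  ext s
  rw [(hv' s).fderiv, Pi.add_apply, policyKernel_mulVec, ← Finset.sum_add_distrib]
  simp [smul_eq_mul]

theorem single_agent_off_policy_policy_gradient_general
    {S A : Type*} [Fintype S] [DecidableEq S] [Fintype A]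
    (d : ℕ)
    -- transition kernel
    (P : S → A → S → ℝ)
    (hP0 : ∀ s a s', 0 ≤ P s a s') (hP1 : ∀ s a, ∑ s', P s a s' = 1)
    -- reward and discount
    (rbar : S → A → ℝ)
    (γ : ℝ) (hγ0 : 0 < γ) (hγ1 : γ < 1)
    -- parametrized policy
    (π : EuclideanSpace ℝ (Fin d) → S → A → ℝ)
    (hπ0 : ∀ θ s a, 0 ≤ π θ s a)
    (hπ1 : ∀ θ s, ∑ a, π θ s a = 1)
    (hπC1 : ∀ s a, ContDiff ℝ 1 (fun θ => π θ s a))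
    -- fixed distribution d_μ
    (dμ : S → ℝ)
    -- the matrix P_{θ,γ}
    (Pγ : EuclideanSpace ℝ (Fin d) → Matrix S S ℝ)
    (hPγ : ∀ θ s s', Pγ θ s s' = γ * ∑ a, π θ s a * P s a s')
    -- the value function v_θ = (I − P_{θ,γ})⁻¹ r_{π_θ}
    (v : EuclideanSpace ℝ (Fin d) → S → ℝ)
    (hv : ∀ θ, v θ = (1 - Pγ θ)⁻¹ *ᵥ (fun s => ∑ a, π θ s a * rbar s a))
    -- the action-value function q_θ
    (q : EuclideanSpace ℝ (Fin d) → S → A → ℝ)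
    (hq : ∀ θ s a, q θ s a = rbar s a + γ * ∑ s', P s a s' * v θ s')
    -- the off-policy objective J_μ
    (J : EuclideanSpace ℝ (Fin d) → ℝ)
    (hJ : ∀ θ, J θ = ∑ s, dμ s * v θ s)
    -- the emphatic weighting mᵀ = d_μᵀ (I − P_{θ,γ})⁻¹
    (m : EuclideanSpace ℝ (Fin d) → S → ℝ)
    (hm : ∀ θ s, m θ s = ∑ s', dμ s' * (1 - Pγ θ)⁻¹ s' s)
    (θ : EuclideanSpace ℝ (Fin d)) :
    fderiv ℝ J θ
      = ∑ s, ∑ a, (m θ s * q θ s a) • fderiv ℝ (fun θ' => π θ' s a) θ := by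
  obtain rfl : Pγ = fun θ' => policyKernel γ P (π θ') := funext fun θ' => by
    ext s s'; exact hPγ θ' s s'
  have hdet : ∀ θ', (1 - policyKernel γ P (π θ')).det ≠ 0 := fun θ' =>
    det_one_sub_policyKernel_ne_zero hγ0.le hγ1 hP0 hP1 (hπ0 θ') (hπ1 θ')
  have hπd : ∀ s a, DifferentiableAt ℝ (π · s a) θ := fun s a =>
    ((hπC1 s a).differentiable one_ne_zero).differentiableAt
  have hvd : ∀ s, DifferentiableAt ℝ (v · s) θ := fun s =>
    (DifferentiableAt.matrix_inv_mulVec (M := fun θ' => 1 - policyKernel γ P (π θ'))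
      (b := fun θ' s => ∑ a, π θ' s a * rbar s a)
      (fun i j => by simp only [Matrix.sub_apply, policyKernel, of_apply]; fun_prop)
      (fun i => by fun_prop) (hdet θ) s).congr_of_eventuallyEq
      (.of_forall fun θ' => congrFun (hv θ') s)
  have hbell : ∀ θ' s, v θ' s = ∑ a, π θ' s a * q θ' s a := fun θ' s => by
    simp only [hq]
    exact (eq_inv_one_sub_policyKernel_mulVec_iff (hdet θ').isUnit).1 (hv θ') s
  have hJd : HasFDerivAt J (∑ s, dμ s • fderiv ℝ (v · s) θ) θ :=
    (HasFDerivAt.fun_sum fun s _ => (hvd s).hasFDerivAt.const_mul (dμ s)).congr_of_eventuallyEq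
      (.of_forall hJ)
  ext u
  have hDv := (eq_inv_one_sub_mulVec_iff (hdet θ).isUnit).2
    (fderiv_value_eq_policyKernel_mulVec_add hπd hvd hq hbell u)
  calc fderiv ℝ J θ u = dμ ⬝ᵥ fun s => fderiv ℝ (v · s) θ u := by
        simp [hJd.fderiv, dotProduct]
    _ = m θ ⬝ᵥ fun s => ∑ a, q θ s a * fderiv ℝ (π · s a) θ u := by
        rw [hDv, dotProduct_mulVec, funext (hm θ)]; rfl
    _ = _ := by
        simp [dotProduct, Finset.mul_sum, mul_assoc, mul_left_comm]

/-- Single-agent off-policy policy gradient identity with emphatic weightings: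
`∇_θ J_μ(θ) = ∑_s m(s) ∑_a [∇_θ π_θ(a|s)] q_θ(s,a)` where `mᵀ = d_μᵀ (I − P_{θ,γ})⁻¹`. -/
theorem single_agent_off_policy_policy_gradient
    {S A : Type*} [Fintype S] [Nonempty S] [DecidableEq S] [Fintype A] [Nonempty A]
    (d : ℕ)
    -- transition kernel
    (P : S → A → S → ℝ)
    (hP0 : ∀ s a s', 0 ≤ P s a s') (hP1 : ∀ s a, ∑ s', P s a s' = 1)
    -- reward and discount
    (rbar : S → A → ℝ)
    (γ : ℝ) (hγ0 : 0 < γ) (hγ1 : γ < 1)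
    -- parametrized policy
    (π : EuclideanSpace ℝ (Fin d) → S → A → ℝ)
    (hπ0 : ∀ θ s a, 0 ≤ π θ s a)
    (hπ1 : ∀ θ s, ∑ a, π θ s a = 1)
    (hπC1 : ∀ s a, ContDiff ℝ 1 (fun θ => π θ s a))
    -- fixed distribution d_μ
    (dμ : S → ℝ) (hdμ0 : ∀ s, 0 ≤ dμ s) (hdμ1 : ∑ s, dμ s = 1)
    -- the matrix P_{θ,γ}
    (Pγ : EuclideanSpace ℝ (Fin d) → Matrix S S ℝ)
    (hPγ : ∀ θ s s', Pγ θ s s' = γ * ∑ a, π θ s a * P s a s')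
    -- the value function v_θ = (I − P_{θ,γ})⁻¹ r_{π_θ}
    (v : EuclideanSpace ℝ (Fin d) → S → ℝ)
    (hv : ∀ θ, v θ = (1 - Pγ θ)⁻¹ *ᵥ (fun s => ∑ a, π θ s a * rbar s a))
    -- the action-value function q_θ
    (q : EuclideanSpace ℝ (Fin d) → S → A → ℝ)
    (hq : ∀ θ s a, q θ s a = rbar s a + γ * ∑ s', P s a s' * v θ s')
    -- the off-policy objective J_μ
    (J : EuclideanSpace ℝ (Fin d) → ℝ)
    (hJ : ∀ θ, J θ = ∑ s, dμ s * v θ s)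
    -- the emphatic weighting mᵀ = d_μᵀ (I − P_{θ,γ})⁻¹
    (m : EuclideanSpace ℝ (Fin d) → S → ℝ)
    (hm : ∀ θ s, m θ s = ∑ s', dμ s' * (1 - Pγ θ)⁻¹ s' s)
    (θ : EuclideanSpace ℝ (Fin d)) :
    fderiv ℝ J θ
      = ∑ s, ∑ a, (m θ s * q θ s a) • fderiv ℝ (fun θ' => π θ' s a) θ :=
  single_agent_off_policy_policy_gradient_general d P hP0 hP1 rbar γ hγ0 hγ1 π hπ0 hπ1 hπC1 dμ Pγ
    hPγ v hv q hq J hJ m hm θ
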